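/- arXiv:1706.02032 — 5 statements merged into one kernel-verified Lean document; each statement's English description precedes it below -/
import Mathlib

section
/- Over the product of Grassmannians G(k, k+i) × G(i, m-n+k+i), the integral of c_top(S_1^∨ ⊗ S_2) · c_top(Q_1^∨ ⊗ Q_2) equals the integral of c(S_1^∨ ⊗ Q_2)^{-1} · c(Q_1^∨ ⊗ S_2)^{-1}, where S_l, Q_l (l=1,2) are the universal subbundles and quotient bundles of the two factors. -/
open MvPolynomial Finset

/-! Chern classes on a product of Grassmannians `G(p, p+q) × G(p', p'+q')` are modeled
via the splitting principle: the Chow ring is generated by the Chern roots of the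
universal subbundles and quotient bundles, which we take as the variables of the
polynomial ring `ℤ[(Fin p ⊕ Fin q) ⊕ (Fin p' ⊕ Fin q')]` (first block: roots of
`S₁, Q₁`; second block: roots of `S₂, Q₂`).  Integration over the product of
Grassmannians is an additive functional `I` which (i) vanishes on homogeneous classes
whose degree differs from `dim = p·q + p'·q'`, and (ii) annihilates the relation ideal,
generated by the positive-degree elementary symmetric functions of the combined roots
of each block (expressing that `c(S ⊕ Q) = c(trivial) = 1`). -/

/-- `j`-th elementary symmetric polynomial of the first block of Chern roots. -/
noncomputable def esymBlk1 (p q p' q' : ℕ) (j : ℕ) :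
    MvPolynomial ((Fin p ⊕ Fin q) ⊕ (Fin p' ⊕ Fin q')) ℤ :=
  ∑ t ∈ (Finset.univ : Finset (Fin p ⊕ Fin q)).powersetCard j, ∏ v ∈ t, X (Sum.inl v)

/-- `j`-th elementary symmetric polynomial of the second block of Chern roots. -/
noncomputable def esymBlk2 (p q p' q' : ℕ) (j : ℕ) :
    MvPolynomial ((Fin p ⊕ Fin q) ⊕ (Fin p' ⊕ Fin q')) ℤ :=
  ∑ t ∈ (Finset.univ : Finset (Fin p' ⊕ Fin q')).powersetCard j, ∏ v ∈ t, X (Sum.inr v)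

/-!
Write `A, B, C₁, C₂` for the total Chern classes of `S₁^∨ ⊗ Q₂`, `Q₁^∨ ⊗ S₂`, `S₁^∨ ⊗ S₂` and
`Q₁^∨ ⊗ Q₂`. As `S₁^∨ ⊗ S₂ ⊕ Q₁^∨ ⊗ Q₂` has rank `D = dim`, the product of its top Chern classes
integrates like `C₁ C₂`. The integral vanishes on the ideal of classes `f` with `∫ g f = 0` for
all `g`, which contains the relations and every class of degree `> D`. Modulo this ideal
`A B C₁ C₂ = c((S₁ ⊕ Q₁)^∨ ⊗ (S₂ ⊕ Q₂)) = 1`, since `S_l ⊕ Q_l` is trivial, and the truncated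
inverses of `A` and `B` are inverses; hence `C₁ C₂` and the product of the truncated inverses
have the same integral.
-/

namespace AddMonoidHom

variable {A M : Type*}

/-- The largest ideal contained in the kernel of `I`. -/
def kerIdeal [CommSemiring A] [AddCommMonoid M] (I : A →+ M) : Ideal A where
  carrier := {f | ∀ g, I (g * f) = 0}
  add_mem' hf hf' g := by simp only [mul_add, map_add, hf g, hf' g, add_zero]
  zero_mem' g := by simp
  smul_mem' c f hf g := by simpa only [smul_eq_mul, ← mul_assoc] using hf (g * c)

theorem mem_kerIdeal [CommSemiring A] [AddCommMonoid M] {I : A →+ M} {f : A} :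
    f ∈ I.kerIdeal ↔ ∀ g, I (g * f) = 0 :=
  Iff.rfl

theorem map_eq_of_mk_kerIdeal_eq [CommRing A] [AddCommGroup M] {I : A →+ M} {f f' : A}
    (h : Ideal.Quotient.mk I.kerIdeal f = Ideal.Quotient.mk I.kerIdeal f') : I f = I f' := by
  have := Ideal.Quotient.eq.mp h 1
  rwa [one_mul, map_sub, sub_eq_zero] at this

end AddMonoidHom

section Vieta

variable {τ S : Type*} [Fintype τ]

theorem Finset.prod_add_eq_pow_of_esymm_eq_zero [CommSemiring S] (c : S) (x : τ → S)
    (hx : ∀ j, 1 ≤ j → ∑ t ∈ univ.powersetCard j, ∏ v ∈ t, x v = 0) :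
    ∏ v, (c + x v) = c ^ Fintype.card τ := by
  classical
  simp_rw [add_comm c, prod_add, sum_powerset]
  rw [sum_eq_single 0]
  · simp
  · intro j _ hj
    calc ∑ t ∈ univ.powersetCard j, (∏ v ∈ t, x v) * ∏ v ∈ univ \ t, c
        = (∑ t ∈ univ.powersetCard j, ∏ v ∈ t, x v) * c ^ (Fintype.card τ - j) := by
          rw [sum_mul]
          refine sum_congr rfl fun t ht => ?_
          rw [prod_const, card_sdiff_of_subset (mem_powersetCard.mp ht).1,
            (mem_powersetCard.mp ht).2, card_univ]
      _ = 0 := by rw [hx j (Nat.one_le_iff_ne_zero.mpr hj), zero_mul]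
  · simp

theorem Finset.prod_sub_eq_pow_of_esymm_eq_zero [CommRing S] (c : S) (x : τ → S)
    (hx : ∀ j, 1 ≤ j → ∑ t ∈ univ.powersetCard j, ∏ v ∈ t, x v = 0) :
    ∏ v, (c - x v) = c ^ Fintype.card τ := by
  simp_rw [sub_eq_add_neg]
  refine prod_add_eq_pow_of_esymm_eq_zero c (fun v => -x v) fun j hj => ?_
  calc ∑ t ∈ univ.powersetCard j, ∏ v ∈ t, -x v
      = (-1) ^ j * ∑ t ∈ univ.powersetCard j, ∏ v ∈ t, x v := by
        rw [mul_sum]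
        exact sum_congr rfl fun t ht => by rw [prod_neg, (mem_powersetCard.mp ht).2]
    _ = 0 := by rw [hx j hj, mul_zero]

theorem prod_prod_one_add_sub_eq_one_of_esymm_eq_zero {α β : Type*} [Fintype α] [Fintype β]
    [CommRing S] (x : α → S) (y : β → S)
    (hx : ∀ j, 1 ≤ j → ∑ t ∈ univ.powersetCard j, ∏ w ∈ t, x w = 0)
    (hy : ∀ j, 1 ≤ j → ∑ t ∈ univ.powersetCard j, ∏ v ∈ t, y v = 0) :
    ∏ w, ∏ v, (1 + y v - x w) = 1 := by
  calc ∏ w, ∏ v, (1 + y v - x w) = ∏ w, (1 - x w) ^ Fintype.card β := by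
        refine prod_congr rfl fun w _ => ?_
        rw [← prod_add_eq_pow_of_esymm_eq_zero (1 - x w) y hy]
        exact prod_congr rfl fun v _ => by ring
    _ = 1 := by rw [prod_pow, prod_sub_eq_pow_of_esymm_eq_zero 1 x hx, one_pow, one_pow]

end Vieta

namespace MvPolynomial

variable {σ R M : Type*} [CommRing R] [AddCommGroup M]

def SupportedInDegree (I : MvPolynomial σ R →+ M) (D : ℕ) : Prop :=
  ∀ (f : MvPolynomial σ R) (d : ℕ), f.IsHomogeneous d → d ≠ D → I f = 0

namespace SupportedInDegree

variable {I : MvPolynomial σ R →+ M} {D : ℕ}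

theorem map_eq_map_homogeneousComponent (hI : SupportedInDegree I D) (f : MvPolynomial σ R) :
    I f = I (homogeneousComponent D f) := by
  conv_lhs => rw [← sum_homogeneousComponent f]
  rw [map_sum]
  refine sum_eq_single D (fun d _ hd => hI _ d (homogeneousComponent_isHomogeneous d f) hd)
    fun hD => ?_
  rw [homogeneousComponent_eq_zero, map_zero]
  simpa [Nat.lt_succ_iff] using hD

theorem map_eq_zero_of_lt_order (hI : SupportedInDegree I D) {f : MvPolynomial σ R}
    (hf : (D : ℕ∞) < (f : MvPowerSeries σ R).order) : I f = 0 := by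
  suffices homogeneousComponent D f = 0 by rw [hI.map_eq_map_homogeneousComponent, this, map_zero]
  ext d
  rw [coeff_homogeneousComponent, coeff_zero]
  split_ifs with hd
  · rw [← coeff_coe]
    exact MvPowerSeries.coeff_of_lt_order (by rwa [hd])
  · rfl

theorem pow_mem_kerIdeal (hI : SupportedInDegree I D) {f : MvPolynomial σ R}
    (hf : constantCoeff f = 0) : f ^ (D + 1) ∈ I.kerIdeal := fun g => by
  refine hI.map_eq_zero_of_lt_order ?_
  have hf' : MvPowerSeries.constantCoeff (f : MvPowerSeries σ R) = 0 := by
    rw [← MvPowerSeries.coeff_zero_eq_constantCoeff_apply, coeff_coe, ← constantCoeff_eq, hf]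
  calc (D : ℕ∞) < (D + 1 : ℕ) := by exact_mod_cast D.lt_succ_self
    _ ≤ ((f : MvPowerSeries σ R) ^ (D + 1)).order :=
      MvPowerSeries.le_order_pow_of_constantCoeff_eq_zero _ hf'
    _ ≤ (g : MvPowerSeries σ R).order + ((f : MvPowerSeries σ R) ^ (D + 1)).order :=
      le_add_self
    _ ≤ ((g * f ^ (D + 1) : MvPolynomial σ R) : MvPowerSeries σ R).order := by
      rw [coe_mul, coe_pow]
      exact MvPowerSeries.le_order_mul

theorem mk_geom_sum_one_sub_mul (hI : SupportedInDegree I D) {a : MvPolynomial σ R}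
    (ha : constantCoeff a = 1) :
    Ideal.Quotient.mk I.kerIdeal ((∑ t ∈ range (D + 1), (1 - a) ^ t) * a) = 1 := by
  have := geom_sum_mul_neg (1 - a) (D + 1)
  rw [sub_sub_cancel] at this
  rw [this, map_sub, map_one, sub_eq_self,
    Ideal.Quotient.eq_zero_iff_mem.mpr (hI.pow_mem_kerIdeal (by simp [ha]))]

theorem map_prod_one_add (hI : SupportedInDegree I D) {τ : Type*} [Fintype τ]
    (ℓ : τ → MvPolynomial σ R) (hℓ : ∀ t, (ℓ t).IsHomogeneous 1) (hτ : Fintype.card τ = D) :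
    I (∏ t, (1 + ℓ t)) = I (∏ t, ℓ t) := by
  classical
  rw [prod_one_add, map_sum, sum_eq_single univ]
  · intro t _ ht
    refine hI _ #t ?_ ?_
    · simpa using IsHomogeneous.prod t ℓ (fun _ => 1) fun u _ => hℓ u
    · rw [← hτ, ← card_univ]
      exact (card_lt_card (ssubset_univ_iff.mpr ht)).ne
  · simp

theorem map_chern_mul_chern_eq_map_topChern_mul_topChern (hI : SupportedInDegree I D)
    {α₁ β₁ α₂ β₂ : Type*} [Fintype α₁] [Fintype β₁] [Fintype α₂] [Fintype β₂]
    (x₁ : α₁ → σ) (y₁ : β₁ → σ) (x₂ : α₂ → σ) (y₂ : β₂ → σ)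
    (hD : Fintype.card α₁ * Fintype.card β₁ + Fintype.card α₂ * Fintype.card β₂ = D) :
    I ((∏ a, ∏ b, (1 + X (y₁ b) - X (x₁ a))) * ∏ a, ∏ b, (1 + X (y₂ b) - X (x₂ a))) =
      I ((∏ a, ∏ b, (X (y₁ b) - X (x₁ a))) * ∏ a, ∏ b, (X (y₂ b) - X (x₂ a))) := by
  have := hI.map_prod_one_add
    (Sum.elim (fun p : α₁ × β₁ => X (y₁ p.2) - X (x₁ p.1))
      fun p : α₂ × β₂ => X (y₂ p.2) - X (x₂ p.1))
    (by rintro (_ | _) <;> exact (isHomogeneous_X _ _).sub (isHomogeneous_X _ _)) (by simpa)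
  simpa only [Fintype.prod_sum_type, Fintype.prod_prod_type, Sum.elim_inl, Sum.elim_inr,
    ← add_sub_assoc] using this

end SupportedInDegree

end MvPolynomial

/-- The inverse total Chern classes are represented by their truncations
`∑_{t ≤ D} (1 - c(·))^t`, `D = k·i + i·(m-n+k)`, which agree with the inverses in degrees `≤ D`. -/
theorem euler_obstruction_two_integral_formulas_general
    (m n k i : ℕ)
    (I : MvPolynomial ((Fin k ⊕ Fin i) ⊕ (Fin i ⊕ Fin (m - n + k))) ℤ →+ ℤ)
    (hdeg : ∀ (f : MvPolynomial ((Fin k ⊕ Fin i) ⊕ (Fin i ⊕ Fin (m - n + k))) ℤ) (d : ℕ),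
      f.IsHomogeneous d → d ≠ k * i + i * (m - n + k) → I f = 0)
    (hrel1 : ∀ (f : MvPolynomial ((Fin k ⊕ Fin i) ⊕ (Fin i ⊕ Fin (m - n + k))) ℤ)
      (j : ℕ), 1 ≤ j → I (f * esymBlk1 k i i (m - n + k) j) = 0)
    (hrel2 : ∀ (f : MvPolynomial ((Fin k ⊕ Fin i) ⊕ (Fin i ⊕ Fin (m - n + k))) ℤ)
      (j : ℕ), 1 ≤ j → I (f * esymBlk2 k i i (m - n + k) j) = 0) :
    I ((∏ x : Fin k, ∏ y : Fin i,
          (X (Sum.inr (Sum.inl y)) - X (Sum.inl (Sum.inl x)))) *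
       (∏ x : Fin i, ∏ y : Fin (m - n + k),
          (X (Sum.inr (Sum.inr y)) - X (Sum.inl (Sum.inr x)))))
      = I
        ((∑ t ∈ Finset.range (k * i + i * (m - n + k) + 1),
            (1 - ∏ x : Fin k, ∏ y : Fin (m - n + k),
              (1 + X (Sum.inr (Sum.inr y)) - X (Sum.inl (Sum.inl x)))) ^ t) *
         (∑ t ∈ Finset.range (k * i + i * (m - n + k) + 1),
            (1 - ∏ x : Fin i, ∏ y : Fin i,
              (1 + X (Sum.inr (Sum.inl y)) - X (Sum.inl (Sum.inr x)))) ^ t)) := by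
  have hI : SupportedInDegree I (k * i + i * (m - n + k)) := hdeg
  set D := k * i + i * (m - n + k)
  set π := Ideal.Quotient.mk I.kerIdeal
  set c : Fin k ⊕ Fin i → Fin i ⊕ Fin (m - n + k) → MvPolynomial _ ℤ :=
    fun w v => 1 + X (Sum.inr v) - X (Sum.inl w)
  set A := ∏ x, ∏ y, c (.inl x) (.inr y)
  set B := ∏ x, ∏ y, c (.inr x) (.inl y)
  set C₁ := ∏ x, ∏ y, c (.inl x) (.inl y)
  set C₂ := ∏ x, ∏ y, c (.inr x) (.inr y)
  have hUnit : π A * π B * (π C₁ * π C₂) = 1 := by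
    have := prod_prod_one_add_sub_eq_one_of_esymm_eq_zero (fun w => π (X (Sum.inl w)))
      (fun v => π (X (Sum.inr v)))
      (fun j hj => by simpa only [esymBlk1, map_sum, map_prod] using
        Ideal.Quotient.eq_zero_iff_mem.mpr (AddMonoidHom.mem_kerIdeal.mpr fun g => hrel1 g j hj))
      (fun j hj => by simpa only [esymBlk2, map_sum, map_prod] using
        Ideal.Quotient.eq_zero_iff_mem.mpr (AddMonoidHom.mem_kerIdeal.mpr fun g => hrel2 g j hj))
    rw [← this]
    simp only [A, B, C₁, C₂, c, map_prod, map_sub, map_add, map_one, Fintype.prod_sum_type,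
      prod_mul_distrib]
    ring
  have hA := hI.mk_geom_sum_one_sub_mul (a := A) (by simp [A, c, map_prod])
  have hB := hI.mk_geom_sum_one_sub_mul (a := B) (by simp [B, c, map_prod])
  set TA := ∑ t ∈ range (D + 1), (1 - A) ^ t
  set TB := ∑ t ∈ range (D + 1), (1 - B) ^ t
  calc _ = I (C₁ * C₂) :=
        (hI.map_chern_mul_chern_eq_map_topChern_mul_topChern _ _ _ _ (by simp [D])).symm
    _ = I (TA * TB) := by
      refine AddMonoidHom.map_eq_of_mk_kerIdeal_eq ?_
      change π (C₁ * C₂) = π (TA * TB)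
      rw [map_mul, map_mul] at *
      linear_combination (π TA * π TB) * hUnit - (π C₁ * π C₂ * π TB * π B) * hA -
        (π C₁ * π C₂) * hB

/-- Over `G(k, k+i) × G(i, m-n+k+i)`, the integral of
`c_top(S₁^∨ ⊗ S₂) · c_top(Q₁^∨ ⊗ Q₂)` equals the integral of
`c(S₁^∨ ⊗ Q₂)⁻¹ · c(Q₁^∨ ⊗ S₂)⁻¹`.  Here `S₁` (rank `k`) and `Q₁` (rank `i`) are the
universal bundles on `G(k,k+i)`, with Chern roots `s₁, q₁`, and `S₂` (rank `i`),
`Q₂` (rank `m-n+k`) those on `G(i, m-n+k+i)`, with Chern roots `s₂, q₂`; the inverse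
total Chern classes are represented by their truncations
`∑_{t ≤ D} (1 - c(·))^t` (`D = k·i + i·(m-n+k)` being the dimension), whose terms of
degree `≤ D` agree with those of the inverse. -/
theorem euler_obstruction_two_integral_formulas
    (m n k i : ℕ) (hmn : n ≤ m) (hn : 1 ≤ n) (hk : k ≤ n - 1)
    (I : MvPolynomial ((Fin k ⊕ Fin i) ⊕ (Fin i ⊕ Fin (m - n + k))) ℤ →+ ℤ)
    (hdeg : ∀ (f : MvPolynomial ((Fin k ⊕ Fin i) ⊕ (Fin i ⊕ Fin (m - n + k))) ℤ) (d : ℕ),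
      f.IsHomogeneous d → d ≠ k * i + i * (m - n + k) → I f = 0)
    (hrel1 : ∀ (f : MvPolynomial ((Fin k ⊕ Fin i) ⊕ (Fin i ⊕ Fin (m - n + k))) ℤ)
      (j : ℕ), 1 ≤ j → I (f * esymBlk1 k i i (m - n + k) j) = 0)
    (hrel2 : ∀ (f : MvPolynomial ((Fin k ⊕ Fin i) ⊕ (Fin i ⊕ Fin (m - n + k))) ℤ)
      (j : ℕ), 1 ≤ j → I (f * esymBlk2 k i i (m - n + k) j) = 0) :
    I ((∏ x : Fin k, ∏ y : Fin i,
          (X (Sum.inr (Sum.inl y)) - X (Sum.inl (Sum.inl x)))) *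
       (∏ x : Fin i, ∏ y : Fin (m - n + k),
          (X (Sum.inr (Sum.inr y)) - X (Sum.inl (Sum.inr x)))))
      = I
        ((∑ t ∈ Finset.range (k * i + i * (m - n + k) + 1),
            (1 - ∏ x : Fin k, ∏ y : Fin (m - n + k),
              (1 + X (Sum.inr (Sum.inr y)) - X (Sum.inl (Sum.inl x)))) ^ t) *
         (∑ t ∈ Finset.range (k * i + i * (m - n + k) + 1),
            (1 - ∏ x : Fin i, ∏ y : Fin i,
              (1 + X (Sum.inr (Sum.inl y)) - X (Sum.inl (Sum.inr x)))) ^ t)) :=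
  euler_obstruction_two_integral_formulas_general m n k i I hdeg hrel1 hrel2
end

section
/- Let α_1,...,α_{k+1}, β_1,...,β_{n-k}, a_1,...,a_{n-k}, b_1,...,b_{m-n+k+1} be elements of a commutative ring satisfying the relations e_{k+1}(α)·e_{n-k}(β) = 0 and e_{n-k}(a)·e_{m-n+k+1}(b) = 0, where e_j denotes the product of all listed variables (the top elementary symmetric monomial α_1⋯α_{k+1}, etc.). Then the product P = ∏_{i=1}^{n-k}∏_{j=1}^{k+1}(a_i - α_j) · ∏_{i=1}^{m-n+k+1}∏_{j=1}^{n-k}(b_i - β_j) can be written as P = A·(-α_1)⋯(-α_{k+1})·b_1⋯b_{m-n+k+1} + B·a_1⋯a_{n-k}·(-β_1)⋯(-β_{n-k}) for suitable polynomials A, B. -/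
open Finset

private lemma prod_neg_fin {R : Type*} [CommRing R] (t : ℕ) (f : Fin t → R) :
    (∏ j, (-f j)) = (-1 : R) ^ t * ∏ j, f j := by
  induction t with
  | zero => simp
  | succ t ih =>
      rw [Fin.prod_univ_succ (fun j => -f j), ih (fun j : Fin t => f j.succ),
        Fin.prod_univ_succ f, pow_succ]
      ring

private lemma lin_decomp {R : Type*} [CommRing R] (t : ℕ) (x : R) (f : Fin t → R) :
    ∃ c : R, ∏ j, (x - f j) = x * c + ∏ j, (-f j) := by
  induction t with
  | zero => exact ⟨0, by simp⟩
  | succ t ih =>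
      obtain ⟨c, hc⟩ := ih (fun j : Fin t => f j.succ)
      refine ⟨(x - f 0) * c + (∏ j : Fin t, (-f j.succ)), ?_⟩
      rw [Fin.prod_univ_succ (fun j => x - f j), hc, Fin.prod_univ_succ (fun j => -f j)]
      ring

private lemma key_decomp {R : Type*} [CommRing R] (t : ℕ) (u c : Fin t → R) (w : R) :
    ∃ d : R, ∏ i, (u i * c i + w) = (∏ i, u i) * (∏ i, c i) + w * d := by
  induction t with
  | zero => exact ⟨0, by simp⟩
  | succ t ih =>
      obtain ⟨d, hd⟩ := ih (fun i : Fin t => u i.succ) (fun i : Fin t => c i.succ)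
      refine ⟨u 0 * c 0 * d + (∏ i : Fin t, u i.succ) * (∏ i : Fin t, c i.succ) + w * d, ?_⟩
      rw [Fin.prod_univ_succ (fun i => u i * c i + w), hd,
        Fin.prod_univ_succ u, Fin.prod_univ_succ c]
      ring

/-- Let `α_1,…,α_{k+1}, β_1,…,β_{n-k}, a_1,…,a_{n-k},
b_1,…,b_{m-n+k+1}` be elements of a commutative ring satisfying
`(α_1⋯α_{k+1})·(β_1⋯β_{n-k}) = 0` and `(a_1⋯a_{n-k})·(b_1⋯b_{m-n+k+1}) = 0`
(the top elementary symmetric monomials annihilate each other, corresponding to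
`c_top(S)c_top(Q) = 0` on a Grassmannian).  Then the product
`P = ∏_{i,j}(a_i - α_j) · ∏_{i,j}(b_i - β_j)` can be written as
`P = A·(-α_1)⋯(-α_{k+1})·b_1⋯b_{m-n+k+1} + B·a_1⋯a_{n-k}·(-β_1)⋯(-β_{n-k})`
for suitable ring elements (polynomials in the variables) `A`, `B`. -/
theorem chern_roots_decomposition
    {R : Type*} [CommRing R] (m n k : ℕ) (hmn : n ≤ m) (hn : 1 ≤ n) (hk : k ≤ n - 1)
    (α : Fin (k + 1) → R) (β : Fin (n - k) → R)
    (a : Fin (n - k) → R) (b : Fin (m - n + k + 1) → R)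
    (hrel1 : (∏ j, α j) * (∏ j, β j) = 0)
    (hrel2 : (∏ i, a i) * (∏ i, b i) = 0) :
    ∃ A B : R,
      (∏ i, ∏ j, (a i - α j)) * (∏ i, ∏ j, (b i - β j))
        = A * ((∏ j, (-α j)) * (∏ i, b i))
          + B * ((∏ i, a i) * (∏ j, (-β j))) := by
  choose c hc using fun i => lin_decomp (k + 1) (a i) α
  choose e he using fun i => lin_decomp (n - k) (b i) β
  obtain ⟨D, hD⟩ := key_decomp (n - k) a c (∏ j, (-α j))
  obtain ⟨E, hE⟩ := key_decomp (m - n + k + 1) b e (∏ j, (-β j))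
  have h1 : (∏ i, ∏ j, (a i - α j)) = (∏ i, a i) * (∏ i, c i) + (∏ j, (-α j)) * D := by
    rw [← hD]; exact Finset.prod_congr rfl fun i _ => hc i
  have h2 : (∏ i, ∏ j, (b i - β j)) = (∏ i, b i) * (∏ i, e i) + (∏ j, (-β j)) * E := by
    rw [← hE]; exact Finset.prod_congr rfl fun i _ => he i
  have hnegs : (∏ j, (-α j)) * (∏ j, (-β j)) = 0 := by
    rw [prod_neg_fin, prod_neg_fin,
      show ((-1 : R) ^ (k + 1) * ∏ j, α j) * ((-1 : R) ^ (n - k) * ∏ j, β j)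
        = ((-1 : R) ^ (k + 1) * (-1 : R) ^ (n - k)) * ((∏ j, α j) * (∏ j, β j)) by ring,
      hrel1, mul_zero]
  refine ⟨D * (∏ i, e i), (∏ i, c i) * E, ?_⟩
  rw [h1, h2,
    show ((∏ i, a i) * (∏ i, c i) + (∏ j, (-α j)) * D) *
        ((∏ i, b i) * (∏ i, e i) + (∏ j, (-β j)) * E)
      = ((∏ i, a i) * (∏ i, b i)) * ((∏ i, c i) * (∏ i, e i))
        + ((∏ j, (-α j)) * (∏ j, (-β j))) * (D * E)
        + (D * (∏ i, e i)) * ((∏ j, (-α j)) * (∏ i, b i))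
        + ((∏ i, c i) * E) * ((∏ i, a i) * (∏ j, (-β j))) by ring,
    hrel2, hnegs]
  ring
end

section
/- Every monomial in the expansion of P = ∏_{i=1}^{n-k}∏_{j=1}^{k+1}(a_i - α_j) · ∏_{i=1}^{m-n+k+1}∏_{j=1}^{n-k}(b_i - β_j) (as a polynomial in the variables a_i, α_j, b_i, β_j) is divisible by at least one of: α_1⋯α_{k+1}·b_1⋯b_{m-n+k+1}, α_1⋯α_{k+1}·β_1⋯β_{n-k}, a_1⋯a_{n-k}·β_1⋯β_{n-k}, or a_1⋯a_{n-k}·b_1⋯b_{m-n+k+1}. -/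
open MvPolynomial Finset

/-! Each factor `X a - X b` has only the monomials `a` and `b`, and containing a given variable
is preserved under multiplication by any monomial. So every monomial of the row
`∏_j (a_i - α_j)` contains `a_i` or all the `α_j`, hence every monomial of the block
`∏_i ∏_j (a_i - α_j)` contains all the `a_i` or all the `α_j`; likewise for the `(b, β)` block,
and a monomial of `P` contains a monomial of each block. -/

namespace MvPolynomial

variable {σ R : Type*}

theorem forall_mem_support_mul_of_monotone [CommSemiring R] {p q : MvPolynomial σ R}
    {P Q : (σ →₀ ℕ) → Prop} (hP : Monotone P) (hQ : Monotone Q)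
    (hp : ∀ d ∈ p.support, P d) (hq : ∀ d ∈ q.support, Q d) :
    ∀ d ∈ (p * q).support, P d ∧ Q d := by
  classical
  intro d hd
  obtain ⟨d₁, hd₁, d₂, hd₂, rfl⟩ := Finset.mem_add.mp (support_mul p q hd)
  exact ⟨hP le_self_add (hp d₁ hd₁), hQ le_add_self (hq d₂ hd₂)⟩

theorem forall_mem_support_prod_of_monotone [CommSemiring R] {ι : Type*} {s : Finset ι}
    {f : ι → MvPolynomial σ R} {P : ι → (σ →₀ ℕ) → Prop} (hP : ∀ i ∈ s, Monotone (P i))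
    (hf : ∀ i ∈ s, ∀ d ∈ (f i).support, P i d) :
    ∀ d ∈ (∏ i ∈ s, f i).support, ∀ i ∈ s, P i d := by
  classical
  induction s using Finset.induction_on with
  | empty => simp
  | insert i s hi ih =>
    rw [prod_insert hi]
    simp only [forall_mem_insert] at hP hf ⊢
    exact forall_mem_support_mul_of_monotone hP.1
      (Monotone.ball (s := (s : Set ι)) hP.2) hf.1 (ih hP.2 hf.2)

theorem one_le_or_one_le_of_mem_support_X_sub_X [CommRing R] {a b : σ} {d : σ →₀ ℕ}
    (hd : d ∈ (X a - X b : MvPolynomial σ R).support) : 1 ≤ d a ∨ 1 ≤ d b := by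
  classical
  rcases mem_union.mp (support_sub σ _ _ hd) with h | h <;>
    simp [mem_singleton.mp (support_monomial_subset h)]

theorem monotone_one_le_apply (x : σ) : Monotone fun d : σ →₀ ℕ => 1 ≤ d x :=
  fun _ _ h h₁ => h₁.trans (h x)

theorem monotone_forall_one_le_apply {ι : Type*} (u : ι → σ) :
    Monotone fun d : σ →₀ ℕ => ∀ i, 1 ≤ d (u i) :=
  Monotone.forall fun i => monotone_one_le_apply (u i)

theorem forall_or_forall_of_mem_support_prod_prod_X_sub_X [CommRing R] {ι κ : Type*}
    [Fintype ι] [Fintype κ] {u : ι → σ} {v : κ → σ} {d : σ →₀ ℕ}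
    (hd : d ∈ (∏ i, ∏ j, (X (u i) - X (v j)) : MvPolynomial σ R).support) :
    (∀ i, 1 ≤ d (u i)) ∨ ∀ j, 1 ≤ d (v j) := by
  have hmono (x y : σ) : Monotone fun e : σ →₀ ℕ => 1 ≤ e x ∨ 1 ≤ e y :=
    (monotone_one_le_apply x).sup (monotone_one_le_apply y)
  have h := forall_mem_support_prod_of_monotone
    (fun i _ => Monotone.ball fun j _ => hmono (u i) (v j))
    (fun i _ => forall_mem_support_prod_of_monotone (fun j _ => hmono (u i) (v j))
      fun j _ _ => one_le_or_one_le_of_mem_support_X_sub_X) d hd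
  by_contra! H
  obtain ⟨⟨i, hu⟩, ⟨j, hv⟩⟩ := H
  have := h i (mem_univ i) j (mem_univ j)
  omega

end MvPolynomial

theorem monomials_of_P_divisibility_general
    (m n k : ℕ) :
    ∀ d ∈ (((∏ i : Fin (n - k), ∏ j : Fin (k + 1),
          (X (Sum.inl (Sum.inl i)) - X (Sum.inl (Sum.inr j)))) *
        (∏ i : Fin (m - n + k + 1), ∏ j : Fin (n - k),
          (X (Sum.inr (Sum.inl i)) - X (Sum.inr (Sum.inr j))))
        : MvPolynomial ((Fin (n - k) ⊕ Fin (k + 1)) ⊕ (Fin (m - n + k + 1) ⊕ Fin (n - k))) ℤ)).support,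
      ((∀ j : Fin (k + 1), 1 ≤ d (Sum.inl (Sum.inr j))) ∧
          (∀ i : Fin (m - n + k + 1), 1 ≤ d (Sum.inr (Sum.inl i)))) ∨
      ((∀ j : Fin (k + 1), 1 ≤ d (Sum.inl (Sum.inr j))) ∧
          (∀ j : Fin (n - k), 1 ≤ d (Sum.inr (Sum.inr j)))) ∨
      ((∀ i : Fin (n - k), 1 ≤ d (Sum.inl (Sum.inl i))) ∧
          (∀ j : Fin (n - k), 1 ≤ d (Sum.inr (Sum.inr j)))) ∨
      ((∀ i : Fin (n - k), 1 ≤ d (Sum.inl (Sum.inl i))) ∧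
          (∀ i : Fin (m - n + k + 1), 1 ≤ d (Sum.inr (Sum.inl i)))) := by
  intro d hd
  obtain ⟨ha | hα, hb | hβ⟩ := forall_mem_support_mul_of_monotone
    ((monotone_forall_one_le_apply _).sup (monotone_forall_one_le_apply _))
    ((monotone_forall_one_le_apply _).sup (monotone_forall_one_le_apply _))
    (fun _ => forall_or_forall_of_mem_support_prod_prod_X_sub_X)
    (fun _ => forall_or_forall_of_mem_support_prod_prod_X_sub_X) d hd
  · exact .inr <| .inr <| .inr ⟨ha, hb⟩
  · exact .inr <| .inr <| .inl ⟨ha, hβ⟩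
  · exact .inl ⟨hα, hb⟩
  · exact .inr <| .inl ⟨hα, hβ⟩

/-- Every monomial in the expansion of
`P = ∏_{i=1}^{n-k} ∏_{j=1}^{k+1} (a_i - α_j) · ∏_{i=1}^{m-n+k+1} ∏_{j=1}^{n-k} (b_i - β_j)`,
as a polynomial over `ℤ` in the indeterminates `a_i, α_j, b_i, β_j`, is divisible by at
least one of the four monomials `α_1⋯α_{k+1}·b_1⋯b_{m-n+k+1}`,
`α_1⋯α_{k+1}·β_1⋯β_{n-k}`, `a_1⋯a_{n-k}·β_1⋯β_{n-k}`, `a_1⋯a_{n-k}·b_1⋯b_{m-n+k+1}`.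
Here the variable index type is `(Fin (n-k) ⊕ Fin (k+1)) ⊕ (Fin (m-n+k+1) ⊕ Fin (n-k))`,
the four summands indexing the `a`'s, `α`'s, `b`'s and `β`'s respectively; divisibility of
a monomial by (say) all the `α`'s and all the `b`'s is expressed by saying that every such
variable has exponent `≥ 1`. -/
theorem monomials_of_P_divisibility
    (m n k : ℕ) (hmn : n ≤ m) (hn : 1 ≤ n) (hk : k ≤ n - 1) :
    ∀ d ∈ (((∏ i : Fin (n - k), ∏ j : Fin (k + 1),
          (X (Sum.inl (Sum.inl i)) - X (Sum.inl (Sum.inr j)))) *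
        (∏ i : Fin (m - n + k + 1), ∏ j : Fin (n - k),
          (X (Sum.inr (Sum.inl i)) - X (Sum.inr (Sum.inr j))))
        : MvPolynomial ((Fin (n - k) ⊕ Fin (k + 1)) ⊕ (Fin (m - n + k + 1) ⊕ Fin (n - k))) ℤ)).support,
      ((∀ j : Fin (k + 1), 1 ≤ d (Sum.inl (Sum.inr j))) ∧
          (∀ i : Fin (m - n + k + 1), 1 ≤ d (Sum.inr (Sum.inl i)))) ∨
      ((∀ j : Fin (k + 1), 1 ≤ d (Sum.inl (Sum.inr j))) ∧
          (∀ j : Fin (n - k), 1 ≤ d (Sum.inr (Sum.inr j)))) ∨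
      ((∀ i : Fin (n - k), 1 ≤ d (Sum.inl (Sum.inl i))) ∧
          (∀ j : Fin (n - k), 1 ≤ d (Sum.inr (Sum.inr j)))) ∨
      ((∀ i : Fin (n - k), 1 ≤ d (Sum.inl (Sum.inl i))) ∧
          (∀ i : Fin (m - n + k + 1), 1 ≤ d (Sum.inr (Sum.inl i)))) :=
  monomials_of_P_divisibility_general m n k
end

section
/- Setting P with the substitution α_{k+1} = 0 and b_{m-n+k+1} = 0, the coefficient B of a_1⋯a_{n-k}·(-β_1)⋯(-β_{n-k}) in the decomposition of P specializes to ∏_{i=1}^{n-k}∏_{j=1}^{k}(a_i - α_j) · ∏_{i=1}^{m-n+k}∏_{j=1}^{n-k}(b_i - β_j). -/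
open MvPolynomial Finset

/-- Substituting `α_{k+1} = 0` and `b_{m-n+k+1} = 0` in
`P = ∏_{i=1}^{n-k} ∏_{j=1}^{k+1} (a_i - α_j) · ∏_{i=1}^{m-n+k+1} ∏_{j=1}^{n-k} (b_i - β_j)`
yields
`(∏_{i=1}^{n-k} ∏_{j=1}^{k} (a_i - α_j) · ∏_{i=1}^{m-n+k} ∏_{j=1}^{n-k} (b_i - β_j))
  · a_1⋯a_{n-k} · (-β_1)⋯(-β_{n-k})`,
i.e. the coefficient `B` of `a_1⋯a_{n-k}·(-β_1)⋯(-β_{n-k})` in the decomposition of `P`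
specializes to `∏_{i,j≤k}(a_i - α_j) · ∏_{i≤m-n+k, j}(b_i - β_j)`.  The variables live in
`MvPolynomial ((Fin (n-k) ⊕ Fin (k+1)) ⊕ (Fin (m-n+k+1) ⊕ Fin (n-k))) ℤ`, the blocks
indexing the `a`'s, `α`'s, `b`'s, `β`'s; the substitution is the algebra endomorphism
sending the last `α`-variable and the last `b`-variable to `0` and fixing all others. -/
theorem specialization_of_P
    (m n k : ℕ) (hmn : n ≤ m) (hn : 1 ≤ n) (hk : k ≤ n - 1) :
    (aeval (R := ℤ)
        (Sum.elim
          (Sum.elim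
            (fun i : Fin (n - k) => (X (Sum.inl (Sum.inl i)) :
              MvPolynomial ((Fin (n - k) ⊕ Fin (k + 1)) ⊕ (Fin (m - n + k + 1) ⊕ Fin (n - k))) ℤ))
            (fun j : Fin (k + 1) => if j = Fin.last k then 0 else X (Sum.inl (Sum.inr j))))
          (Sum.elim
            (fun i : Fin (m - n + k + 1) =>
              if i = Fin.last (m - n + k) then 0 else X (Sum.inr (Sum.inl i)))
            (fun j : Fin (n - k) => X (Sum.inr (Sum.inr j)))))
        ((∏ i : Fin (n - k), ∏ j : Fin (k + 1),
            (X (Sum.inl (Sum.inl i)) - X (Sum.inl (Sum.inr j)))) *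
          (∏ i : Fin (m - n + k + 1), ∏ j : Fin (n - k),
            (X (Sum.inr (Sum.inl i)) - X (Sum.inr (Sum.inr j))))))
      = ((∏ i : Fin (n - k), ∏ j : Fin k,
            (X (Sum.inl (Sum.inl i)) - X (Sum.inl (Sum.inr j.castSucc)))) *
          (∏ i : Fin (m - n + k), ∏ j : Fin (n - k),
            (X (Sum.inr (Sum.inl i.castSucc)) - X (Sum.inr (Sum.inr j))))) *
        ((∏ i : Fin (n - k), X (Sum.inl (Sum.inl i))) *
          (∏ j : Fin (n - k), (-X (Sum.inr (Sum.inr j))))) := by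
  have h : ∀ {N : ℕ} (j : Fin N), (j.castSucc = Fin.last N) = False :=
    fun j => eq_false (Fin.castSucc_lt_last j).ne
  simp only [map_mul, map_prod, map_sub, aeval_X, Sum.elim_inl, Sum.elim_inr,
    Fin.prod_univ_castSucc, h, if_false, if_true, sub_zero, zero_sub, Finset.prod_mul_distrib]
  ring
end

section
/- On the Nash blowup N_{m,n,k} = P(Q_1^∨ ⊗ S_2) over G(k,n) × G(n-k,m), the total Chern class of the Nash tangent bundle T satisfies c(T) = c(O(1))^{mn} · c(S_1^∨ ⊗ Q_2 ⊗ O(1))^{-1}, where O(1) is the tautological bundle of the projective bundle. -/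
open Polynomial Finset

/-- On the Nash blowup `N_{m,n,k} = P(Q₁^∨ ⊗ S₂)` over
`G(k,n) × G(n-k,m)`, the Nash tangent bundle `T` satisfies
`c(T) = c(O(1))^{mn} · c(S₁^∨ ⊗ Q₂ ⊗ O(1))⁻¹`.

Setup (Chern roots in an arbitrary commutative ring `A`, the Chow ring of `N_{m,n,k}`):
`h = c₁(O(1))`; `t : Fin d → A` are the Chern roots of `T`, `d = (m+k)(n-k) - 1` being
its rank; `s₁ : Fin k → A` and `q₂ : Fin (m-n+k) → A` are the Chern roots of `S₁`
(pulled back from `G(k,n)`) and `Q₂` (from `G(n-k,m)`), so `S₁^∨ ⊗ Q₂` has roots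
`q₂ y - s₁ x`.  The hypothesis `hroots` encodes the two exact sequences
`0 → E → Hom(K^n,K^m) → Hom(S₁,Q₂) → 0` and `0 → O(-1) → p*E → T ⊗ O(-1) → 0` at the
level of Chern roots: the multiset of roots of `(T ⊗ O(-1)) ⊕ O(-1) ⊕ (S₁^∨ ⊗ Q₂)`
is that of the trivial bundle of rank `mn` (all roots `0`), expressed as an identity of
characteristic polynomials in `A[Z]`.  The conclusion expresses
`c(T) · c(S₁^∨ ⊗ Q₂ ⊗ O(1)) = (1 + h)^{mn}`, i.e.
`c(T) = c(O(1))^{mn} · c(S₁^∨ ⊗ Q₂ ⊗ O(1))⁻¹`, with the inverse total Chern class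
represented by a unit `u` of `A`. -/
theorem nash_tangent_bundle_chern_class
    {A : Type*} [CommRing A]
    (m n k : ℕ) (hmn : n ≤ m) (hn : 1 ≤ n) (hk : k ≤ n - 1)
    (h : A) (t : Fin ((m + k) * (n - k) - 1) → A)
    (s₁ : Fin k → A) (q₂ : Fin (m - n + k) → A)
    (hroots :
      (∏ i, (Polynomial.X + Polynomial.C (t i - h))) *
        (Polynomial.X - Polynomial.C h) *
        (∏ x, ∏ y, (Polynomial.X + Polynomial.C (q₂ y - s₁ x)))
      = (Polynomial.X : Polynomial A) ^ (m * n))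
    (u : Aˣ)
    (hu : (u : A) = ∏ x, ∏ y, (1 + (q₂ y - s₁ x) + h)) :
    (∏ i, (1 + t i)) = (1 + h) ^ (m * n) * ((u⁻¹ : Aˣ) : A) := by
  have H := congrArg (Polynomial.eval (1 + h)) hroots
  simp only [Polynomial.eval_mul, Polynomial.eval_prod, Polynomial.eval_add,
    Polynomial.eval_sub, Polynomial.eval_X, Polynomial.eval_C, Polynomial.eval_pow] at H
  have h1 : (1 : A) + h - h = 1 := by ring
  rw [h1, mul_one] at H
  have ht : (∏ i, (1 + h + (t i - h))) = ∏ i, (1 + t i) := by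
    apply Finset.prod_congr rfl; intro i _; ring
  have hq : (∏ x, ∏ y, (1 + h + (q₂ y - s₁ x))) = (u : A) := by
    rw [hu]; apply Finset.prod_congr rfl; intro x _
    apply Finset.prod_congr rfl; intro y _; ring
  rw [ht, hq] at H
  calc (∏ i, (1 + t i)) = (∏ i, (1 + t i)) * ((u : A) * ((u⁻¹ : Aˣ) : A)) := by
        rw [Units.mul_inv, mul_one]
    _ = ((∏ i, (1 + t i)) * (u : A)) * ((u⁻¹ : Aˣ) : A) := by ring
    _ = (1 + h) ^ (m * n) * ((u⁻¹ : Aˣ) : A) := by rw [H]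
end
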